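/- arXiv:1011.3149 — 3 statements merged into one kernel-verified Lean document; each statement's English description precedes it below -/
import Mathlib

section
/- Let z₀ ∈ ℂ, 0 < R < R′, and let h : ℂ → ℂ be complex-differentiable on the open ball B(z₀, R′). Let λ₁, …, λₙ be pairwise distinct points of the open ball B(z₀, R). Define the n×n complex matrix M by M_{jk} = (h(λ_k) − h(λ_j))/(λ_j − λ_k) for j ≠ k and M_{jj} = −h′(λ_j). Then (1/(2πi)ⁿ) ∮ … ∮ ∏_{j=1}^{n} [h(z_j)/(λ_j − z_j)] · det[(z_k − λ_j)^{−1}]_{j,k=1}^{n} dz_n … dz_1 = det M, where each variable z₁, …, zₙ is integrated once counterclockwise around the circle |z − z₀| = R. -/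
open MeasureTheory

/-- Iterated counterclockwise contour integral over the circle `|z - c| = R`
in each of the `n` variables. -/
noncomputable def iterCircleIntegral : (n : ℕ) → ((Fin n → ℂ) → ℂ) → ℂ → ℝ → ℂ
  | 0, f, _, _ => f Fin.elim0
  | n + 1, f, c, R =>
      circleIntegral (fun z => iterCircleIntegral n (fun w => f (Fin.cons z w)) c R) c R

open Metric Complex Real

/-!
Factor `h (z k) / (lam k - z k)` into column `k` of the Cauchy matrix: the integrand becomes a
determinant whose `(j, k)` entry depends on `z k` alone, so expanding it over permutations turns the
`n`-fold integral into the determinant of the one-variable integrals. Writing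
`h z = h a + (z - a) · h[a, z]`, Cauchy's formula gives
`∮ h z / ((a - z) (z - b)) dz = -2πi · h[a, b]` for the divided difference `h[a, b] = dslope h a b`,
since `∮ dz / ((z - a) (z - b)) = 0` for `a, b` inside the circle. So the matrix of integrals is
`2πi • Mᵀ`.
-/

theorem sphere_subset_closure_ball {E : Type*} [NormedAddCommGroup E] [NormedSpace ℝ E] (c : E)
    {R : ℝ} (hR : R ≠ 0) : sphere c R ⊆ closure (ball c R) :=
  (closure_ball c hR).symm ▸ sphere_subset_closedBall

theorem iterCircleIntegral_sum_mul_prod {ι : Type*} [Fintype ι] (c : ℂ) (R : ℝ) {n : ℕ}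
    (a : ι → ℂ) (f : ι → Fin n → ℂ → ℂ) (hf : ∀ s i, CircleIntegrable (f s i) c R) :
    iterCircleIntegral n (fun z => ∑ s, a s * ∏ i, f s i (z i)) c R =
      ∑ s, a s * ∏ i, ∮ z in C(c, R), f s i z := by
  induction n generalizing a with
  | zero => simp [iterCircleIntegral]
  | succ n ih =>
    have inner (z : ℂ) :
        iterCircleIntegral n (fun w => ∑ s, a s * ∏ i, f s i ((Fin.cons z w : Fin (n + 1) → ℂ) i))
          c R = ∑ s, (a s * ∏ i, ∮ w in C(c, R), f s (Fin.succ i) w) * f s 0 z := by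
      simp_rw [Fin.prod_univ_succ, Fin.cons_zero, Fin.cons_succ, ← mul_assoc]
      rw [ih _ _ fun s i => hf s i.succ]
      exact Finset.sum_congr rfl fun s _ => by ring
    simp only [iterCircleIntegral, inner]
    rw [circleIntegral.integral_fun_sum fun s _ => by exact (hf s 0).const_smul]
    simp_rw [circleIntegral.integral_const_mul, Fin.prod_univ_succ]
    exact Finset.sum_congr rfl fun s _ => by ring

theorem iterCircleIntegral_det {n : ℕ} (c : ℂ) (R : ℝ) (F : Fin n → Fin n → ℂ → ℂ)
    (hF : ∀ j k, CircleIntegrable (F j k) c R) :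
    iterCircleIntegral n (fun z => (Matrix.of fun j k => F j k (z k)).det) c R =
      (Matrix.of fun j k => ∮ z in C(c, R), F j k z).det := by
  simp only [Matrix.det_apply', Matrix.of_apply]
  exact iterCircleIntegral_sum_mul_prod c R _ _ fun σ i => hF (σ i) i

theorem circleIntegral_inv_sub_mul_inv_sub {c a b : ℂ} {R : ℝ} (ha : a ∈ ball c R)
    (hb : b ∈ ball c R) : ∮ z in C(c, R), ((z - a) * (z - b))⁻¹ = 0 := by
  rcases eq_or_ne a b with rfl | hab
  · simp_rw [← sq, ← zpow_natCast, ← zpow_neg]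
    exact circleIntegral.integral_sub_zpow_of_ne (by norm_num) c a R
  have hR : 0 ≤ R := (pos_of_mem_ball ha).le
  have partial_fractions : Set.EqOn (fun z => ((z - a) * (z - b))⁻¹)
      (fun z => (a - b)⁻¹ * ((z - a)⁻¹ - (z - b)⁻¹)) (sphere c R) := by
    intro z hz
    have hza := sub_ne_zero.2 (sphere_disjoint_ball.ne_of_mem hz ha)
    have hzb := sub_ne_zero.2 (sphere_disjoint_ball.ne_of_mem hz hb)
    field_simp [sub_ne_zero.2 hab]
    ring
  have hint (w : ℂ) (hw : w ∈ ball c R) : CircleIntegrable (fun z => (z - w)⁻¹) c R :=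
    circleIntegrable_sub_inv_iff.2 <| Or.inr <| by
      rw [abs_of_nonneg hR]; exact sphere_disjoint_ball.notMem_of_mem_right hw
  rw [circleIntegral.integral_congr hR partial_fractions, circleIntegral.integral_const_mul,
    circleIntegral.integral_sub (hint a ha) (hint b hb),
    circleIntegral.integral_sub_inv_of_mem_ball ha, circleIntegral.integral_sub_inv_of_mem_ball hb,
    sub_self, mul_zero]

theorem DiffContOnCl.dslope {f : ℂ → ℂ} {U : Set ℂ} (hf : DiffContOnCl ℂ f U) (hU : IsOpen U)
    {a : ℂ} (ha : a ∈ U) : DiffContOnCl ℂ (dslope f a) U :=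
  ⟨(differentiableOn_dslope (hU.mem_nhds ha)).2 hf.differentiableOn,
    (continuousOn_dslope (Filter.mem_of_superset (hU.mem_nhds ha) subset_closure)).2
      ⟨hf.continuousOn, hf.differentiableAt hU ha⟩⟩

theorem circleIntegral_div_sub_mul_inv_sub {c a b : ℂ} {R : ℝ} {h : ℂ → ℂ}
    (hh : DiffContOnCl ℂ h (ball c R)) (ha : a ∈ ball c R) (hb : b ∈ ball c R) :
    ∮ z in C(c, R), h z / (a - z) * (z - b)⁻¹ = 2 * π * I * -dslope h a b := by
  have hR := pos_of_mem_ball ha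
  set g := dslope h a
  have hg : DiffContOnCl ℂ g (ball c R) := hh.dslope isOpen_ball ha
  have decomp : Set.EqOn (fun z => h z / (a - z) * (z - b)⁻¹)
      (fun z => -1 * ((z - b)⁻¹ • g z + h a * ((z - a) * (z - b))⁻¹)) (sphere c R) := by
    intro z hz
    dsimp only
    have hza := sub_ne_zero.2 (sphere_disjoint_ball.ne_of_mem hz ha)
    have hzb := sub_ne_zero.2 (sphere_disjoint_ball.ne_of_mem hz hb)
    have hgz : h z = (z - a) * g z + h a := by
      rw [← smul_eq_mul, sub_smul_dslope, sub_add_cancel]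
    rw [hgz, smul_eq_mul, ← neg_sub z a]
    field_simp
  have hint₁ : CircleIntegrable (fun z => (z - b)⁻¹ • g z) c R := by
    refine ContinuousOn.circleIntegrable hR.le <|
      ((continuousOn_id.sub continuousOn_const).inv₀ fun z hz => ?_).smul
        (hg.continuousOn.mono (sphere_subset_closure_ball c hR.ne'))
    exact sub_ne_zero.2 (sphere_disjoint_ball.ne_of_mem hz hb)
  have hint₂ : CircleIntegrable (fun z => h a * ((z - a) * (z - b))⁻¹) c R := by
    refine ContinuousOn.circleIntegrable hR.le <| continuousOn_const.mul <|
      ((continuousOn_id.sub continuousOn_const).mul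
        (continuousOn_id.sub continuousOn_const)).inv₀ fun z hz => ?_
    exact mul_ne_zero (sub_ne_zero.2 (sphere_disjoint_ball.ne_of_mem hz ha))
      (sub_ne_zero.2 (sphere_disjoint_ball.ne_of_mem hz hb))
  rw [circleIntegral.integral_congr hR.le decomp, circleIntegral.integral_const_mul,
    circleIntegral.integral_add hint₁ hint₂, circleIntegral.integral_const_mul,
    hg.circleIntegral_sub_inv_smul hb, circleIntegral_inv_sub_mul_inv_sub ha hb]
  simp [g]

theorem circleIntegrable_div_sub_mul_inv_sub {c a b : ℂ} {R : ℝ} (hR : 0 ≤ R) {h : ℂ → ℂ}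
    (hh : ContinuousOn h (sphere c R)) (ha : a ∉ sphere c R) (hb : b ∉ sphere c R) :
    CircleIntegrable (fun z => h z / (a - z) * (z - b)⁻¹) c R := by
  refine ContinuousOn.circleIntegrable hR <|
    (hh.div (continuousOn_const.sub continuousOn_id) fun z hz => ?_).mul
      ((continuousOn_id.sub continuousOn_const).inv₀ fun z hz => ?_)
  · exact sub_ne_zero.2 (ne_of_mem_of_not_mem hz ha).symm
  · exact sub_ne_zero.2 (ne_of_mem_of_not_mem hz hb)

theorem neg_dslope_of_ne {h : ℂ → ℂ} {a b : ℂ} (hab : a ≠ b) :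
    -dslope h a b = (h b - h a) / (a - b) := by
  rw [dslope_of_ne _ hab.symm, slope_def_field, ← div_neg, neg_sub]

theorem stmt0 (z₀ : ℂ) (R R' : ℝ) (hR : 0 < R) (hRR' : R < R')
    (h : ℂ → ℂ) (hh : DifferentiableOn ℂ h (Metric.ball z₀ R'))
    (n : ℕ) (lam : Fin n → ℂ) (hmem : ∀ j, lam j ∈ Metric.ball z₀ R)
    (hinj : Function.Injective lam)
    (M : Matrix (Fin n) (Fin n) ℂ)
    (hM : ∀ j k, M j k = if j = k then -(deriv h (lam j))
        else (h (lam k) - h (lam j)) / (lam j - lam k)) :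
    (1 / (2 * (Real.pi : ℂ) * Complex.I)) ^ n *
      iterCircleIntegral n (fun z => (∏ j, h (z j) / (lam j - z j)) *
        Matrix.det (Matrix.of fun j k => (z k - lam j)⁻¹)) z₀ R = M.det := by
  have hh' : DiffContOnCl ℂ h (ball z₀ R) := hh.diffContOnCl_ball (closedBall_subset_ball hRR')
  have hM_dslope (j k : Fin n) : -dslope h (lam j) (lam k) = M j k := by
    rw [hM]
    split_ifs with hjk
    · rw [hjk, dslope_same]
    · exact neg_dslope_of_ne (hinj.ne hjk)
  set F : Fin n → Fin n → ℂ → ℂ := fun j k w => h w / (lam k - w) * (w - lam j)⁻¹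
  have integrand : (fun z : Fin n → ℂ => (∏ j, h (z j) / (lam j - z j)) *
      (Matrix.of fun j k => (z k - lam j)⁻¹).det) =
      fun z => (Matrix.of fun j k => F j k (z k)).det := by
    funext z
    rw [← Matrix.det_mul_row]
    rfl
  have hF (j k : Fin n) : CircleIntegrable (F j k) z₀ R :=
    circleIntegrable_div_sub_mul_inv_sub hR.le
      (hh'.continuousOn.mono (sphere_subset_closure_ball z₀ hR.ne'))
      (sphere_disjoint_ball.notMem_of_mem_right (hmem k))
      (sphere_disjoint_ball.notMem_of_mem_right (hmem j))
  have residues : (Matrix.of fun j k => ∮ w in C(z₀, R), F j k w) = (2 * π * I) • M.transpose := by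
    ext j k
    simp [F, circleIntegral_div_sub_mul_inv_sub hh' (hmem k) (hmem j), hM_dslope]
  rw [integrand, iterCircleIntegral_det z₀ R F hF, residues, Matrix.det_smul, Matrix.det_transpose,
    Fintype.card_fin, ← mul_assoc, ← mul_pow, one_div_mul_cancel two_pi_I_ne_zero, one_pow, one_mul]
end

section
/- Let U ⊆ ℂ be open, r ∈ U, γ ∈ ℂ, and let s₁, …, s_m and ρ₁, …, ρ_p be complex numbers with ρ_j ≠ r for all j. Let F, ν̃ : U → ℂ be continuous at r, and let ϑ be a complex-valued function on U \ {r} such that (λ − r) ϑ(λ) → ϑ_reg as λ → r, for some ϑ_reg ∈ ℂ. Assume that for all λ in some punctured neighborhood of r contained in U and avoiding the points ρ₁, …, ρ_p, one has 1 + γ ϑ(λ) F(λ) = e^{−2πi ν̃(λ)} · ∏_{j=1}^{m} (λ − s_j) / [(λ − r) · ∏_{j=1}^{p} (λ − ρ_j)]. Then γ ϑ_reg F(r) = e^{−2πi ν̃(r)} · ∏_{j=1}^{m} (r − s_j) / ∏_{j=1}^{p} (r − ρ_j). -/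
/-! Multiplying the identity by `λ - r` leaves, on the left, a function tending to `γ ϑreg F(r)`,
and on the right a function continuous at `r` (the remaining denominator `∏ (λ - ρⱼ)` does not
vanish there); the two limits at `r` must agree. -/

open Filter Topology

section Residue

variable {𝕜 : Type*} [NontriviallyNormedField 𝕜] {r a : 𝕜}

lemma tendsto_sub_mul_one_add {ψ : 𝕜 → 𝕜}
    (h : Tendsto (fun x => (x - r) * ψ x) (𝓝[≠] r) (𝓝 a)) :
    Tendsto (fun x => (x - r) * (1 + ψ x)) (𝓝[≠] r) (𝓝 a) := by
  have hsub : Tendsto (fun x => x - r) (𝓝[≠] r) (𝓝 0) :=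
    tendsto_sub_nhds_zero_iff.2 (tendsto_id.mono_left nhdsWithin_le_nhds)
  simpa [mul_one_add] using hsub.add h

lemma eq_of_tendsto_sub_mul_of_eventuallyEq_div {f g : 𝕜 → 𝕜}
    (hf : Tendsto (fun x => (x - r) * f x) (𝓝[≠] r) (𝓝 a)) (hg : ContinuousAt g r)
    (hfg : ∀ᶠ x in 𝓝[≠] r, f x = g x / (x - r)) : a = g r := by
  have hev : (fun x => (x - r) * f x) =ᶠ[𝓝[≠] r] g := by
    filter_upwards [hfg, self_mem_nhdsWithin] with x hx hxr
    rw [hx, mul_div_cancel₀ _ (sub_ne_zero.2 hxr)]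
  exact tendsto_nhds_unique (hf.congr' hev) hg.continuousWithinAt

end Residue

theorem stmt6_general (U : Set ℂ) (r : ℂ) (γ : ℂ)
    (m p : ℕ) (s : Fin m → ℂ) (ρ : Fin p → ℂ) (hρ : ∀ j, ρ j ≠ r)
    (F νt : ℂ → ℂ) (hF : ContinuousAt F r) (hν : ContinuousAt νt r)
    (ϑ : ℂ → ℂ) (ϑreg : ℂ)
    (hϑ : Tendsto (fun lam => (lam - r) * ϑ lam) (nhdsWithin r {r}ᶜ) (nhds ϑreg))
    (heq : ∀ᶠ lam in nhdsWithin r {r}ᶜ, lam ∈ U ∧ (∀ j, lam ≠ ρ j) ∧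
      1 + γ * ϑ lam * F lam = Complex.exp (-(2 * (Real.pi : ℂ) * Complex.I) * νt lam) *
        (∏ j, (lam - s j)) / ((lam - r) * ∏ j, (lam - ρ j))) :
    γ * ϑreg * F r = Complex.exp (-(2 * (Real.pi : ℂ) * Complex.I) * νt r) *
      (∏ j, (r - s j)) / ∏ j, (r - ρ j) := by
  have hres : Tendsto (fun lam => (lam - r) * (γ * ϑ lam * F lam)) (𝓝[≠] r)
      (𝓝 (γ * ϑreg * F r)) :=
    ((tendsto_const_nhds.mul hϑ).mul hF.continuousWithinAt).congr fun lam => by ring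
  have hprod : ∏ j, (r - ρ j) ≠ 0 :=
    Finset.prod_ne_zero_iff.2 fun j _ => sub_ne_zero.2 (hρ j).symm
  have hcont : ContinuousAt (fun lam => Complex.exp (-(2 * (Real.pi : ℂ) * Complex.I) * νt lam) *
      (∏ j, (lam - s j)) / ∏ j, (lam - ρ j)) r := by
    fun_prop (disch := exact hprod)
  refine eq_of_tendsto_sub_mul_of_eventuallyEq_div (r := r)
    (tendsto_sub_mul_one_add hres) hcont ?_
  filter_upwards [heq] with lam h
  rw [h.2.2, div_mul_eq_div_div_swap]

theorem stmt6 (U : Set ℂ) (hU : IsOpen U) (r : ℂ) (hr : r ∈ U) (γ : ℂ)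
    (m p : ℕ) (s : Fin m → ℂ) (ρ : Fin p → ℂ) (hρ : ∀ j, ρ j ≠ r)
    (F νt : ℂ → ℂ) (hF : ContinuousAt F r) (hν : ContinuousAt νt r)
    (ϑ : ℂ → ℂ) (ϑreg : ℂ)
    (hϑ : Tendsto (fun lam => (lam - r) * ϑ lam) (nhdsWithin r {r}ᶜ) (nhds ϑreg))
    (heq : ∀ᶠ lam in nhdsWithin r {r}ᶜ, lam ∈ U ∧ (∀ j, lam ≠ ρ j) ∧
      1 + γ * ϑ lam * F lam = Complex.exp (-(2 * (Real.pi : ℂ) * Complex.I) * νt lam) *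
        (∏ j, (lam - s j)) / ((lam - r) * ∏ j, (lam - ρ j))) :
    γ * ϑreg * F r = Complex.exp (-(2 * (Real.pi : ℂ) * Complex.I) * νt r) *
      (∏ j, (r - s j)) / ∏ j, (r - ρ j) :=
  stmt6_general U r γ m p s ρ hρ F νt hF hν ϑ ϑreg hϑ heq
end

section
/- Let T > 0, c > 0, h ∈ ℝ, and K(λ) = 2c/(λ² + c²). Let δ > 0, let ε : ℝ → ℝ be measurable with λ ↦ Log(1 + e^{−ε(λ)/T}) integrable, and let u : ℝ × (−δ, δ) → ℂ satisfy: (i) u(λ, 0) = ε(λ) for all λ; (ii) for every α ∈ (−δ, δ) and every μ ∈ ℝ, the function λ ↦ Log(1 + e^{−u(λ,α)/T}) is integrable and u(μ, α) = μ² − (h + 2πiαT) − (T/2π) ∫_ℝ K(μ − λ) Log(1 + e^{−u(λ,α)/T}) dλ; (iii) for every λ, the function α ↦ u(λ, α) is differentiable at 0 with derivative v(λ); (iv) there is an integrable g : ℝ → ℝ with |Log(1 + e^{−u(λ,α)/T}) − Log(1 + e^{−ε(λ)/T})| ≤ |α| g(λ) for all λ and all 0 < |α| < δ. Then, with ϑ(λ)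 = (1 + e^{ε(λ)/T})^{−1}, one has v(μ) = −2πiT + (1/2π) ∫_ℝ K(μ − λ) ϑ(λ) v(λ) dλ for every μ ∈ ℝ. -/
/-!
Subtracting the Yang–Yang equations at `α` and at `0` and dividing by `α`, the difference quotients
of the integrand converge pointwise to `-(1/T) ϑ v` (chain rule, with the Fermi identity
`(1 + e^{-w})⁻¹ e^{-w} = (1 + e^{w})⁻¹`), and they are dominated by `(2/c) g` because `K ≤ 2/c`.
Dominated convergence therefore differentiates the integral at `α = 0`, and uniqueness of the
derivative of `α ↦ u(μ, α)` at `0` gives the linearized equation.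
-/
open MeasureTheory Filter Topology

theorem Complex.inv_one_add_exp_neg_mul_exp_neg (w : ℂ) :
    (1 + Complex.exp (-w))⁻¹ * Complex.exp (-w) = (1 + Complex.exp w)⁻¹ := by
  rw [Complex.exp_neg, ← mul_inv, add_mul, one_mul, inv_mul_cancel₀ (Complex.exp_ne_zero w),
    add_comm]

theorem Complex.one_add_exp_ofReal_mem_slitPlane (x : ℝ) :
    1 + Complex.exp (x : ℂ) ∈ Complex.slitPlane := by
  rw [← Complex.ofReal_exp, ← Complex.ofReal_one, ← Complex.ofReal_add,
    Complex.ofReal_mem_slitPlane]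
  positivity

theorem HasDerivAt.clog_one_add_cexp_neg_div {u : ℝ → ℂ} {v : ℂ} {a x T : ℝ}
    (hu : HasDerivAt u v a) (hua : u a = x) :
    HasDerivAt (fun α => Complex.log (1 + Complex.exp (-u α / T)))
      (-(1 / T) * (1 + Complex.exp ((x : ℂ) / T))⁻¹ * v) a := by
  have hslit : 1 + Complex.exp (-u a / T) ∈ Complex.slitPlane := by
    rw [hua, ← Complex.ofReal_neg, ← Complex.ofReal_div]
    exact Complex.one_add_exp_ofReal_mem_slitPlane _
  refine (((hu.neg.div_const (T : ℂ)).cexp.const_add 1).clog_real hslit).congr_deriv ?_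
  rw [Pi.neg_apply, hua, ← Complex.inv_one_add_exp_neg_mul_exp_neg, neg_div]
  ring

/-- Unlike `hasDerivAt_integral_of_dominated_loc_of_lip`, this needs a Lipschitz bound only at `x₀`
and no measurability of `F'`: dominated convergence is applied to the slopes directly. -/
theorem hasDerivAt_integral_of_dominated_slope {α E : Type*} [MeasurableSpace α] {μ : Measure α}
    [NormedAddCommGroup E] [NormedSpace ℝ E] {F : ℝ → α → E} {F' : α → E} {x₀ : ℝ}
    {s : Set ℝ} {bound : α → ℝ} (hs : s ∈ 𝓝 x₀) (hF_int : ∀ x ∈ s, Integrable (F x) μ)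
    (h_bound : ∀ᵐ a ∂μ, ∀ x ∈ s, x ≠ x₀ → ‖F x a - F x₀ a‖ ≤ bound a * |x - x₀|)
    (bound_integrable : Integrable bound μ)
    (h_diff : ∀ᵐ a ∂μ, HasDerivAt (F · a) (F' a) x₀) :
    HasDerivAt (fun x => ∫ a, F x a ∂μ) (∫ a, F' a ∂μ) x₀ := by
  have hs' : s ∈ 𝓝[≠] x₀ := nhdsWithin_le_nhds hs
  have hF₀ : Integrable (F x₀) μ := hF_int x₀ (mem_of_mem_nhds hs)
  have slope_integral : ∀ x ∈ s,
      ∫ a, slope (F · a) x₀ x ∂μ = slope (fun x => ∫ a, F x a ∂μ) x₀ x := by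
    intro x hx
    simp only [slope_def_module]
    rw [integral_smul, integral_sub (hF_int x hx) hF₀]
  rw [hasDerivAt_iff_tendsto_slope]
  refine Tendsto.congr' (eventually_of_mem hs' slope_integral) ?_
  refine tendsto_integral_filter_of_dominated_convergence bound ?_ ?_ bound_integrable ?_
  · filter_upwards [hs'] with x hx
    exact ((hF_int x hx).sub hF₀).aestronglyMeasurable.const_smul _
  · filter_upwards [hs', self_mem_nhdsWithin] with x hx hne
    filter_upwards [h_bound] with a ha
    have hpos : 0 < |x - x₀| := abs_pos.2 (sub_ne_zero.2 hne)
    calc ‖slope (F · a) x₀ x‖ = |x - x₀|⁻¹ * ‖F x a - F x₀ a‖ := by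
          rw [slope_def_module, norm_smul, norm_inv, Real.norm_eq_abs]
      _ ≤ |x - x₀|⁻¹ * (bound a * |x - x₀|) := by gcongr; exact ha x hx hne
      _ = bound a := by field_simp
  · filter_upwards [h_diff] with a ha
    exact hasDerivAt_iff_tendsto_slope.1 ha

noncomputable def liebKernel (c x : ℝ) : ℝ := 2 * c / (x ^ 2 + c ^ 2)

theorem continuous_liebKernel {c : ℝ} (hc : c ≠ 0) : Continuous (liebKernel c) := by
  unfold liebKernel
  exact continuous_const.div (by fun_prop) fun x => by positivity

theorem norm_liebKernel_le {c : ℝ} (hc : 0 < c) (x : ℝ) : ‖(liebKernel c x : ℂ)‖ ≤ 2 / c := by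
  rw [Complex.norm_real, Real.norm_eq_abs, liebKernel, abs_of_nonneg (by positivity),
    div_le_div_iff₀ (by positivity) hc]
  nlinarith [sq_nonneg x]

theorem MeasureTheory.Integrable.liebKernel_sub_mul {c : ℝ} (hc : 0 < c) {f : ℝ → ℂ}
    (hf : Integrable f) (mu : ℝ) : Integrable (fun lam => (liebKernel c (mu - lam) : ℂ) * f lam) :=
  hf.bdd_mul (Complex.continuous_ofReal.comp
      ((continuous_liebKernel hc.ne').comp (continuous_sub_left mu))).aestronglyMeasurable
    (Eventually.of_forall fun _ => norm_liebKernel_le hc _)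

theorem hasDerivAt_integral_liebKernel_mul_clog {T c δ : ℝ} (hc : 0 < c) (hδ : 0 < δ)
    {ε : ℝ → ℝ} {u : ℝ → ℝ → ℂ} {v : ℝ → ℂ} {g : ℝ → ℝ} (hu0 : ∀ lam, u lam 0 = ε lam)
    (hui : ∀ α ∈ Set.Ioo (-δ) δ,
      Integrable (fun lam => Complex.log (1 + Complex.exp (-(u lam α) / T))))
    (hv : ∀ lam, HasDerivAt (u lam) (v lam) 0) (hg : Integrable g)
    (hdom : ∀ lam α : ℝ, 0 < |α| → |α| < δ →
      ‖Complex.log (1 + Complex.exp (-(u lam α) / T)) -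
        Complex.log (1 + Complex.exp (-(ε lam : ℂ) / T))‖ ≤ |α| * g lam) (mu : ℝ) :
    HasDerivAt
      (fun α => ∫ lam, (liebKernel c (mu - lam) : ℂ) *
        Complex.log (1 + Complex.exp (-(u lam α) / T)))
      (∫ lam, (liebKernel c (mu - lam) : ℂ) *
        (-(1 / T) * (1 + Complex.exp ((ε lam : ℂ) / T))⁻¹ * v lam)) 0 := by
  refine hasDerivAt_integral_of_dominated_slope (bound := fun lam => 2 / c * g lam)
    (Ioo_mem_nhds (by linarith) hδ) (fun α hα => (hui α hα).liebKernel_sub_mul hc mu) ?_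
    (hg.const_mul _) (Eventually.of_forall fun lam =>
      ((hv lam).clog_one_add_cexp_neg_div (hu0 lam)).const_mul _)
  refine Eventually.of_forall fun lam α hα hα0 => ?_
  have hdom' := hdom lam α (abs_pos.2 hα0) (abs_lt.2 hα)
  rw [← hu0] at hdom'
  calc _ ≤ 2 / c * (|α| * g lam) := by
        rw [← mul_sub, norm_mul]
        exact mul_le_mul (norm_liebKernel_le hc _) hdom' (norm_nonneg _) (by positivity)
    _ = 2 / c * g lam * |α - 0| := by rw [sub_zero]; ring

theorem stmt9_general (T c h δ : ℝ) (hT : 0 < T) (hc : 0 < c) (hδ : 0 < δ)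
    (K : ℝ → ℝ) (hK : ∀ lam : ℝ, K lam = 2 * c / (lam ^ 2 + c ^ 2))
    (ε : ℝ → ℝ)
    (u : ℝ → ℝ → ℂ)  -- u lam α
    (hu0 : ∀ lam : ℝ, u lam 0 = (ε lam : ℂ))
    (hui : ∀ α ∈ Set.Ioo (-δ) δ,
      Integrable (fun lam : ℝ => Complex.log (1 + Complex.exp (-(u lam α) / (T : ℂ)))))
    (hueq : ∀ α ∈ Set.Ioo (-δ) δ, ∀ mu : ℝ,
      u mu α = (mu : ℂ) ^ 2 - ((h : ℂ) + 2 * (Real.pi : ℂ) * Complex.I * (α : ℂ) * (T : ℂ)) -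
        ((T : ℂ) / (2 * (Real.pi : ℂ))) *
          ∫ lam : ℝ, (K (mu - lam) : ℂ) * Complex.log (1 + Complex.exp (-(u lam α) / (T : ℂ))))
    (v : ℝ → ℂ)
    (hv : ∀ lam : ℝ, HasDerivAt (fun α : ℝ => u lam α) (v lam) 0)
    (g : ℝ → ℝ) (hg : Integrable g)
    (hdom : ∀ lam α : ℝ, 0 < |α| → |α| < δ →
      ‖Complex.log (1 + Complex.exp (-(u lam α) / (T : ℂ))) -
        Complex.log (1 + Complex.exp (-(ε lam : ℂ) / (T : ℂ)))‖ ≤ |α| * g lam)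
    (ϑ : ℝ → ℂ) (hϑ : ∀ lam : ℝ, ϑ lam = (1 + Complex.exp ((ε lam : ℂ) / (T : ℂ)))⁻¹) :
    ∀ mu : ℝ, v mu = -2 * (Real.pi : ℂ) * Complex.I * (T : ℂ) +
      (1 / (2 * (Real.pi : ℂ))) * ∫ lam : ℝ, (K (mu - lam) : ℂ) * ϑ lam * v lam := by
  obtain rfl : K = liebKernel c := funext hK
  intro mu
  have hI := hasDerivAt_integral_liebKernel_mul_clog hc hδ hu0 hui hv hg hdom mu
  have hα : HasDerivAt (fun α : ℝ => (α : ℂ)) 1 0 := (hasDerivAt_id 0).ofReal_comp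
  have hrhs := ((((hα.const_mul (2 * (Real.pi : ℂ) * Complex.I)).mul_const (T : ℂ)).const_add
    (h : ℂ)).const_sub ((mu : ℂ) ^ 2)).sub (hI.const_mul ((T : ℂ) / (2 * (Real.pi : ℂ))))
  have hu_deriv := hrhs.congr_of_eventuallyEq
    (eventually_of_mem (Ioo_mem_nhds (by linarith) hδ) fun α hα => hueq α hα mu)
  have hpull : ∫ lam, (liebKernel c (mu - lam) : ℂ) *
        (-(1 / T) * (1 + Complex.exp ((ε lam : ℂ) / T))⁻¹ * v lam) =
      -(1 / T) * ∫ lam, (liebKernel c (mu - lam) : ℂ) * ϑ lam * v lam := by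
    rw [← integral_const_mul]
    congr 1 with lam
    rw [hϑ]
    ring
  have hT' : (T : ℂ) ≠ 0 := Complex.ofReal_ne_zero.2 hT.ne'
  rw [(hv mu).unique hu_deriv, hpull]
  field_simp
  ring

theorem stmt9 (T c h δ : ℝ) (hT : 0 < T) (hc : 0 < c) (hδ : 0 < δ)
    (K : ℝ → ℝ) (hK : ∀ lam : ℝ, K lam = 2 * c / (lam ^ 2 + c ^ 2))
    (ε : ℝ → ℝ) (hεm : Measurable ε)
    (hεi : Integrable (fun lam : ℝ => Complex.log (1 + Complex.exp (-(ε lam : ℂ) / (T : ℂ)))))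
    (u : ℝ → ℝ → ℂ)  -- u lam α
    (hu0 : ∀ lam : ℝ, u lam 0 = (ε lam : ℂ))
    (hui : ∀ α ∈ Set.Ioo (-δ) δ,
      Integrable (fun lam : ℝ => Complex.log (1 + Complex.exp (-(u lam α) / (T : ℂ)))))
    (hueq : ∀ α ∈ Set.Ioo (-δ) δ, ∀ mu : ℝ,
      u mu α = (mu : ℂ) ^ 2 - ((h : ℂ) + 2 * (Real.pi : ℂ) * Complex.I * (α : ℂ) * (T : ℂ)) -
        ((T : ℂ) / (2 * (Real.pi : ℂ))) *
          ∫ lam : ℝ, (K (mu - lam) : ℂ) * Complex.log (1 + Complex.exp (-(u lam α) / (T : ℂ))))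
    (v : ℝ → ℂ)
    (hv : ∀ lam : ℝ, HasDerivAt (fun α : ℝ => u lam α) (v lam) 0)
    (g : ℝ → ℝ) (hg : Integrable g)
    (hdom : ∀ lam α : ℝ, 0 < |α| → |α| < δ →
      ‖Complex.log (1 + Complex.exp (-(u lam α) / (T : ℂ))) -
        Complex.log (1 + Complex.exp (-(ε lam : ℂ) / (T : ℂ)))‖ ≤ |α| * g lam)
    (ϑ : ℝ → ℂ) (hϑ : ∀ lam : ℝ, ϑ lam = (1 + Complex.exp ((ε lam : ℂ) / (T : ℂ)))⁻¹) :
    ∀ mu : ℝ, v mu = -2 * (Real.pi : ℂ) * Complex.I * (T : ℂ) +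
      (1 / (2 * (Real.pi : ℂ))) * ∫ lam : ℝ, (K (mu - lam) : ℂ) * ϑ lam * v lam :=
  stmt9_general T c h δ hT hc hδ K hK ε u hu0 hui hueq v hv g hg hdom ϑ hϑ
end
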